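/- For complex numbers p₁, p₂, q₁, q₂, set ζ := p₁•η + p₂•η', ζ# := (conj p₁)•η' - (conj p₂)•η, λ := q₁•η + q₂•η', λ# := (conj q₁)•η' - (conj q₂)•η. Then M ζ ζ# * M λ λ# = M (ζ+λ) (ζ#+λ#) holds if and only if both p₂*q₁ = p₁*q₂ and p₁*(conj q₁) + p₂*(conj q₂) = (conj p₁)*q₁ + (conj p₂)*q₂. (These are exactly the two constraints derived in the lemma forcing the group parameters to satisfy p₁ = p₂ ∈ ℝ; the matrices M a b are the exponentials exp(ζQ₁ + ζ^#Q₂).) -/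
import Mathlib
set_option maxHeartbeats 1000000

noncomputable section

abbrev Λ : Type := ExteriorAlgebra ℂ (Fin 2 → ℂ)

def η : Λ := ExteriorAlgebra.ι ℂ (Pi.single 0 1)

def η' : Λ := ExteriorAlgebra.ι ℂ (Pi.single 1 1)

/-- The nilpotent matrix `ζ Q₁ + ζ^# Q₂` (scaled) with odd parameters `a`, `b`. -/
def N (a b : Λ) : Matrix (Fin 3) (Fin 3) Λ :=
  !![0, 0, -b;
     0, 0, -a;
     a, -b, 0]

/-- The exponential `exp(ζ Q₁ + ζ^# Q₂)`, which truncates at second order. -/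
def M (a b : Λ) : Matrix (Fin 3) (Fin 3) Λ :=
  1 + N a b + ((1 / 2 : ℂ)) • (N a b ^ 2)

def ω : Λ := η * η'

lemma ηη : η * η = 0 := ExteriorAlgebra.ι_sq_zero _
lemma η'η' : η' * η' = 0 := ExteriorAlgebra.ι_sq_zero _
lemma η'η : η' * η = -ω := by
  have h := ExteriorAlgebra.ι_add_mul_swap (R := ℂ) (Pi.single 0 1 : Fin 2 → ℂ) (Pi.single 1 1)
  rw [show ExteriorAlgebra.ι ℂ (Pi.single 0 1 : Fin 2 → ℂ) = η from rfl,
    show ExteriorAlgebra.ι ℂ (Pi.single 1 1 : Fin 2 → ℂ) = η' from rfl] at h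
  rw [ω]
  exact eq_neg_of_add_eq_zero_right h

lemma ηω : η * ω = 0 := by rw [ω, ← mul_assoc, ηη, zero_mul]
lemma ωη' : ω * η' = 0 := by rw [ω, mul_assoc, η'η', mul_zero]
lemma ωη : ω * η = 0 := by
  rw [show ω * η = η * (η' * η) from by rw [ω, mul_assoc], η'η, mul_neg, ηω, neg_zero]
lemma η'ω : η' * ω = 0 := by
  rw [show η' * ω = (η' * η) * η' from by rw [ω, mul_assoc], η'η, neg_mul, ωη', neg_zero]
lemma ωω : ω * ω = 0 := by
  rw [show ω * ω = η * (η' * ω) from by nth_rewrite 1 [ω]; rw [mul_assoc], η'ω, mul_zero]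

lemma ωdef : η * η' = ω := rfl

def detF : ∀ i : ℕ, ((Fin 2 → ℂ) [⋀^Fin i]→ₗ[ℂ] ℂ)
  | 2 => Matrix.detRowAlternating
  | _ => 0

def L : Λ →ₗ[ℂ] ℂ := ExteriorAlgebra.liftAlternating detF

lemma Lω : L ω = 1 := by
  rw [ω, η, η', L, ExteriorAlgebra.liftAlternating_ι_mul, ExteriorAlgebra.liftAlternating_ι]
  show Matrix.det (Matrix.of (Fin.cons (Pi.single 0 1) ![(Pi.single 1 1 : Fin 2 → ℂ)])) = 1
  rw [Matrix.det_fin_two]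
  simp [Pi.single_apply]

lemma Lη : L η = 0 := by
  rw [η, L, ExteriorAlgebra.liftAlternating_ι]; rfl

lemma Lη' : L η' = 0 := by
  rw [η', L, ExteriorAlgebra.liftAlternating_ι]; rfl

lemma L1 : L 1 = 0 := by
  rw [L, ExteriorAlgebra.liftAlternating_one]; rfl

theorem group_law_iff_constraints (p₁ p₂ q₁ q₂ : ℂ) :
    (M (p₁ • η + p₂ • η') ((starRingEnd ℂ p₁) • η' - (starRingEnd ℂ p₂) • η) *
        M (q₁ • η + q₂ • η') ((starRingEnd ℂ q₁) • η' - (starRingEnd ℂ q₂) • η) =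
      M ((p₁ • η + p₂ • η') + (q₁ • η + q₂ • η'))
        (((starRingEnd ℂ p₁) • η' - (starRingEnd ℂ p₂) • η) +
          ((starRingEnd ℂ q₁) • η' - (starRingEnd ℂ q₂) • η))) ↔
    (p₂ * q₁ = p₁ * q₂ ∧
      p₁ * (starRingEnd ℂ q₁) + p₂ * (starRingEnd ℂ q₂) =
        (starRingEnd ℂ p₁) * q₁ + (starRingEnd ℂ p₂) * q₂) := by
  constructor
  · intro h
    have h10 := congrFun (congrFun h 1) 0
    have h11 := congrFun (congrFun h 1) 1
    simp only [M, N, pow_two, Matrix.mul_apply, Matrix.add_apply, Matrix.smul_apply,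
      Matrix.one_apply, Fin.sum_univ_three, Fin.isValue, Matrix.of_apply, Matrix.cons_val',
      Matrix.cons_val_zero, Matrix.cons_val_one, Matrix.head_cons, Matrix.empty_val',
      Matrix.cons_val_fin_one, Matrix.cons_val_two, Nat.succ_eq_add_one, Nat.reduceAdd,
      Matrix.tail_cons, Matrix.head_fin_const, reduceIte, Fin.reduceEq, one_ne_zero] at h10 h11
    simp only [mul_add, add_mul, sub_mul, mul_sub, smul_sub, sub_smul, smul_mul_assoc,
      Algebra.mul_smul_comm, smul_smul, smul_add, smul_neg, neg_mul, mul_neg, ηη, η'η', η'η,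
      ωdef, ηω, ωη, ωη', η'ω, ωω, mul_one, one_mul, mul_zero, zero_mul, add_zero, zero_add,
      smul_zero, neg_neg, neg_zero, neg_add, sub_zero, zero_sub] at h10 h11
    have h10' := congrArg L h10
    have h11' := congrArg L h11
    simp only [map_add, map_smul, map_neg, map_zero, map_sub, Lω, Lη, Lη', L1, smul_eq_mul,
      mul_one, mul_zero, add_zero, zero_add, neg_zero, neg_neg, sub_zero, zero_sub] at h10' h11'
    exact ⟨by linear_combination h10', by linear_combination 2*h11'⟩
  · rintro ⟨hc1, hc2⟩
    have hc1' := congrArg (starRingEnd ℂ) hc1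
    simp only [map_mul] at hc1'
    ext i j
    fin_cases i <;> fin_cases j <;>
      simp only [M, N, pow_two, Matrix.mul_apply, Matrix.add_apply, Matrix.smul_apply,
        Matrix.one_apply, Fin.sum_univ_three, Fin.isValue, Matrix.of_apply, Matrix.cons_val',
        Matrix.cons_val_zero, Matrix.cons_val_one, Matrix.head_cons, Matrix.empty_val',
        Matrix.cons_val_fin_one, Matrix.cons_val_two, Nat.succ_eq_add_one, Nat.reduceAdd,
        Matrix.tail_cons, Matrix.head_fin_const, reduceIte, Fin.reduceEq, one_ne_zero,
        Fin.zero_eta, Fin.mk_one, Fin.reduceFinMk] <;>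
      simp only [mul_add, add_mul, sub_mul, mul_sub, smul_sub, sub_smul, smul_mul_assoc,
        Algebra.mul_smul_comm, smul_smul, smul_add, smul_neg, neg_mul, mul_neg, ηη, η'η', η'η,
        ωdef, ηω, ωη, ωη', η'ω, ωω, mul_one, one_mul, mul_zero, zero_mul, add_zero, zero_add,
        smul_zero, neg_neg, neg_zero, neg_add, sub_zero, zero_sub]
    all_goals match_scalars
    all_goals first
      | ring1
      | linear_combination hc1
      | linear_combination -hc1
      | linear_combination hc1/2
      | linear_combination -hc1/2
      | linear_combination hc1'
      | linear_combination -hc1'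
      | linear_combination hc1'/2
      | linear_combination -hc1'/2
      | linear_combination hc2
      | linear_combination -hc2
      | linear_combination hc2/2
      | linear_combination -hc2/2
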